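/- Let (b₁,b₂) ∈ B with b₃ = (b₁b₂)^(−1), and assume b₁ ≥ 2b₂ + b₃ and D(b₁,b₃,b₂) < 0 (so (b₁,b₂) lies in B_{II}, the existence region of the type-II Riemann ellipsoids). Then (x²−y²)·D(x,y,z) ≠ 0 both for (x,y,z) = (b₁,b₃,b₂) and for (x,y,z) = (b₃,b₁,b₂), and the four numbers G^R₊(b₁,b₃,b₂), G^R₋(b₁,b₃,b₂), G^R₊(b₃,b₁,b₂), G^R₋(b₃,b₁,b₂) are all nonnegative; consequently the quantities N^R₊(x,y,z) = ½(√(G^R₊(x,y,z)) + √(G^R₋(x,y,z))) and N^R₋(x,y,z) = ½(√(G^R₊(x,y,z)) − √(G^R₋(x,y,z))), which define the momenta of the type-II ellipsoids, are well-defined real numbers at both argument triples. -/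

import Mathlib

open Real MeasureTheory

/-- `C₁(x,y,z) = 2πg ∫₀^∞ s·((s+x²)(s+y²)(s+z²))^(−3/2) ds`. -/
noncomputable def riC1 (g x y z : ℝ) : ℝ :=
  2 * π * g * ∫ s in Set.Ioi (0:ℝ),
    s * ((s + x ^ 2) * (s + y ^ 2) * (s + z ^ 2)) ^ (-(3:ℝ)/2)

/-- `C₂(x,y,z) = 2πg ∫₀^∞ s²·((s+x²)(s+y²)(s+z²))^(−3/2) ds`. -/
noncomputable def riC2 (g x y z : ℝ) : ℝ :=
  2 * π * g * ∫ s in Set.Ioi (0:ℝ),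
    s ^ 2 * ((s + x ^ 2) * (s + y ^ 2) * (s + z ^ 2)) ^ (-(3:ℝ)/2)

/-- `G(x,y,z) = x²(y²−z²)C₁ + (y²−4z²)(z²C₁ + C₂)`. -/
noncomputable def Gfun (g x y z : ℝ) : ℝ :=
  x ^ 2 * (y ^ 2 - z ^ 2) * riC1 g x y z
    + (y ^ 2 - 4 * z ^ 2) * (z ^ 2 * riC1 g x y z + riC2 g x y z)

/-- `D(x,y,z) = x²(y²−z²) + z²(4z²−y²)`. -/
def Dfun (x y z : ℝ) : ℝ := x ^ 2 * (y ^ 2 - z ^ 2) + z ^ 2 * (4 * z ^ 2 - y ^ 2)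

/-- `G^R₊(x,y,z)`. -/
noncomputable def GRp (g x y z : ℝ) : ℝ :=
  (y - z) ^ 4 * (x ^ 2 - (y + 2 * z) ^ 2) *
    ((x ^ 2 - z ^ 2) * Gfun g x y z) / ((x ^ 2 - y ^ 2) * Dfun x y z)

/-- `G^R₋(x,y,z)`. -/
noncomputable def GRm (g x y z : ℝ) : ℝ :=
  (y + z) ^ 4 * (x ^ 2 - (y - 2 * z) ^ 2) *
    ((x ^ 2 - z ^ 2) * Gfun g x y z) / ((x ^ 2 - y ^ 2) * Dfun x y z)

/-- `N^R₊(x,y,z) = ½(√G^R₊ + √G^R₋)`. -/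
noncomputable def NRp (g x y z : ℝ) : ℝ :=
  (Real.sqrt (GRp g x y z) + Real.sqrt (GRm g x y z)) / 2

/-- `N^R₋(x,y,z) = ½(√G^R₊ − √G^R₋)`. -/
noncomputable def NRm (g x y z : ℝ) : ℝ :=
  (Real.sqrt (GRp g x y z) - Real.sqrt (GRm g x y z)) / 2

/-- Membership in `B = {(b₁,b₂) : b₁ > b₂ > b₁^(−1/2) > 0}`. -/
def memB (b1 b2 : ℝ) : Prop := b2 < b1 ∧ (Real.sqrt b1)⁻¹ < b2 ∧ 0 < (Real.sqrt b1)⁻¹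

/-!
`C₁` and `C₂` are integrals of positive functions, so the sign of `G(x,y,z)` is fixed as soon
as `y² − z²` and `y² − 4z²` have a common sign. On `B_{II}` the ordering `b₃ < b₂ < b₁`
together with `b₁ ≥ 2b₂ + b₃` then fixes the sign of every factor of `G^R±` at both triples;
since `D` is symmetric in its first two arguments, the single hypothesis `D(b₁,b₃,b₂) < 0`
serves both.
-/

theorem memB.inv_mul_mem_Ioo {b1 b2 : ℝ} (hB : memB b1 b2) : (b1 * b2)⁻¹ ∈ Set.Ioo 0 b2 := by
  obtain ⟨-, hlt, hpos⟩ := hB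
  have hs : 0 < √b1 := inv_pos.mp hpos
  have hb1 : 0 < b1 := sqrt_pos.mp hs
  have hb2 : 0 < b2 := hpos.trans hlt
  have h1 : 1 < b2 * √b1 := (inv_lt_iff_one_lt_mul₀ hs).mp hlt
  refine ⟨by positivity, (inv_lt_iff_one_lt_mul₀ (by positivity)).mpr ?_⟩
  calc 1 < (b2 * √b1) ^ 2 := one_lt_pow₀ h1 two_ne_zero
    _ = b2 * (b1 * b2) := by rw [mul_pow, sq_sqrt hb1.le]; ring

theorem Dfun_comm (x y z : ℝ) : Dfun x y z = Dfun y x z := by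
  unfold Dfun; ring

section

variable {g x y z : ℝ}

theorem riC1_nonneg (hg : 0 ≤ g) : 0 ≤ riC1 g x y z := by
  refine mul_nonneg (by positivity) (setIntegral_nonneg measurableSet_Ioi fun s hs => ?_)
  have hs : 0 < s := hs
  positivity

theorem riC2_nonneg (hg : 0 ≤ g) : 0 ≤ riC2 g x y z := by
  refine mul_nonneg (by positivity) (setIntegral_nonneg measurableSet_Ioi fun s hs => ?_)
  have hs : 0 < s := hs
  positivity

theorem Gfun_nonpos (hg : 0 ≤ g) (h : y ^ 2 ≤ z ^ 2) : Gfun g x y z ≤ 0 := by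
  have hC₁ : 0 ≤ riC1 g x y z := riC1_nonneg hg
  have hC : 0 ≤ z ^ 2 * riC1 g x y z + riC2 g x y z :=
    add_nonneg (mul_nonneg (sq_nonneg z) hC₁) (riC2_nonneg hg)
  exact add_nonpos
    (mul_nonpos_of_nonpos_of_nonneg
      (mul_nonpos_of_nonneg_of_nonpos (sq_nonneg x) (by linarith)) hC₁)
    (mul_nonpos_of_nonpos_of_nonneg (by linarith [sq_nonneg z]) hC)

theorem Gfun_nonneg (hg : 0 ≤ g) (h : 4 * z ^ 2 ≤ y ^ 2) : 0 ≤ Gfun g x y z := by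
  have hC₁ : 0 ≤ riC1 g x y z := riC1_nonneg hg
  have hC : 0 ≤ z ^ 2 * riC1 g x y z + riC2 g x y z :=
    add_nonneg (mul_nonneg (sq_nonneg z) hC₁) (riC2_nonneg hg)
  exact add_nonneg
    (mul_nonneg (mul_nonneg (sq_nonneg x) (by linarith [sq_nonneg z])) hC₁)
    (mul_nonneg (by linarith) hC)

noncomputable def riRatio (g x y z : ℝ) : ℝ :=
  (x ^ 2 - z ^ 2) * Gfun g x y z / ((x ^ 2 - y ^ 2) * Dfun x y z)

theorem GRp_eq : GRp g x y z = (y - z) ^ 4 * ((x ^ 2 - (y + 2 * z) ^ 2) * riRatio g x y z) := by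
  unfold GRp riRatio; ring

theorem GRm_eq : GRm g x y z = (y + z) ^ 4 * ((x ^ 2 - (y - 2 * z) ^ 2) * riRatio g x y z) := by
  unfold GRm riRatio; ring

theorem riRatio_nonneg (hg : 0 ≤ g) (hy : 0 ≤ y) (hyz : y < z) (hzx : z < x)
    (hD : Dfun x y z < 0) : 0 ≤ riRatio g x y z := by
  have hyz2 : y ^ 2 < z ^ 2 := pow_lt_pow_left₀ hyz hy two_ne_zero
  have hzx2 : z ^ 2 < x ^ 2 := pow_lt_pow_left₀ hzx (hy.trans hyz.le) two_ne_zero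
  exact div_nonneg_of_nonpos
    (mul_nonpos_of_nonneg_of_nonpos (by linarith) (Gfun_nonpos hg hyz2.le))
    (mul_nonpos_of_nonneg_of_nonpos (by linarith) hD.le)

theorem riRatio_nonpos (hg : 0 ≤ g) (hx : 0 ≤ x) (hxz : x < z) (hzy : 2 * z ≤ y)
    (hD : Dfun x y z < 0) : riRatio g x y z ≤ 0 := by
  have hz : 0 ≤ z := hx.trans hxz.le
  have hxz2 : x ^ 2 < z ^ 2 := pow_lt_pow_left₀ hxz hx two_ne_zero
  have hzy2 : 4 * z ^ 2 ≤ y ^ 2 := by nlinarith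
  exact div_nonpos_of_nonpos_of_nonneg
    (mul_nonpos_of_nonpos_of_nonneg (by linarith) (Gfun_nonneg hg hzy2))
    (mul_nonneg_of_nonpos_of_nonpos (by nlinarith) hD.le)

theorem GRp_nonneg_and_GRm_nonneg_of_add_le (hg : 0 ≤ g) (hy : 0 ≤ y) (hyz : y < z)
    (hx : y + 2 * z ≤ x) (hD : Dfun x y z < 0) : 0 ≤ GRp g x y z ∧ 0 ≤ GRm g x y z := by
  have hR := riRatio_nonneg hg hy hyz (by linarith) hD
  rw [GRp_eq, GRm_eq]
  exact ⟨mul_nonneg (by positivity) (mul_nonneg (by nlinarith) hR),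
    mul_nonneg (by positivity) (mul_nonneg (by nlinarith) hR)⟩

theorem GRp_nonneg_and_GRm_nonneg_of_add_le_left (hg : 0 ≤ g) (hx : 0 ≤ x) (hxz : x < z)
    (hy : x + 2 * z ≤ y) (hD : Dfun x y z < 0) : 0 ≤ GRp g x y z ∧ 0 ≤ GRm g x y z := by
  have hR := riRatio_nonpos hg hx hxz (by linarith) hD
  rw [GRp_eq, GRm_eq]
  exact ⟨mul_nonneg (by positivity) (mul_nonneg_of_nonpos_of_nonpos (by nlinarith) hR),
    mul_nonneg (by positivity) (mul_nonneg_of_nonpos_of_nonpos (by nlinarith) hR)⟩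

end

/-- On the existence region `B_{II}` (`b₁ ≥ 2b₂ + b₃` and
`D(b₁,b₃,b₂) < 0`), the denominators `(x²−y²)D(x,y,z)` are nonzero and `G^R₊`, `G^R₋` are
nonnegative at the triples `(b₁,b₃,b₂)` and `(b₃,b₁,b₂)`, so the momenta `N^R±` of the
type-II ellipsoids are well defined. -/
theorem stmt_11 (g b1 b2 b3 : ℝ) (hg : 0 < g) (hB : memB b1 b2) (hb3 : b3 = (b1 * b2)⁻¹)
    (hII : 2 * b2 + b3 ≤ b1) (hD : Dfun b1 b3 b2 < 0) :
    (b1 ^ 2 - b3 ^ 2) * Dfun b1 b3 b2 ≠ 0 ∧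
    (b3 ^ 2 - b1 ^ 2) * Dfun b3 b1 b2 ≠ 0 ∧
    0 ≤ GRp g b1 b3 b2 ∧ 0 ≤ GRm g b1 b3 b2 ∧
    0 ≤ GRp g b3 b1 b2 ∧ 0 ≤ GRm g b3 b1 b2 ∧
    Real.sqrt (GRp g b1 b3 b2) ^ 2 = GRp g b1 b3 b2 ∧
    Real.sqrt (GRm g b1 b3 b2) ^ 2 = GRm g b1 b3 b2 ∧
    Real.sqrt (GRp g b3 b1 b2) ^ 2 = GRp g b3 b1 b2 ∧
    Real.sqrt (GRm g b3 b1 b2) ^ 2 = GRm g b3 b1 b2 := by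
  obtain ⟨hb3pos, hb32⟩ : b3 ∈ Set.Ioo 0 b2 := hb3 ▸ hB.inv_mul_mem_Ioo
  have hD' : Dfun b3 b1 b2 < 0 := Dfun_comm b1 b3 b2 ▸ hD
  have hsq : b3 ^ 2 < b1 ^ 2 :=
    pow_lt_pow_left₀ (hb32.trans hB.1) hb3pos.le two_ne_zero
  obtain ⟨hp1, hm1⟩ :=
    GRp_nonneg_and_GRm_nonneg_of_add_le hg.le hb3pos.le hb32 (by linarith) hD
  obtain ⟨hp2, hm2⟩ :=
    GRp_nonneg_and_GRm_nonneg_of_add_le_left hg.le hb3pos.le hb32 (by linarith) hD'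
  exact ⟨mul_ne_zero (by linarith) hD.ne, mul_ne_zero (by linarith) hD'.ne,
    hp1, hm1, hp2, hm2, sq_sqrt hp1, sq_sqrt hm1, sq_sqrt hp2, sq_sqrt hm2⟩
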